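/- arXiv:2012.14747 — 3 statements merged into one kernel-verified Lean document; each statement's English description precedes it below -/
import Mathlib

section
/- Fix an integer d ≥ 1 and Λ > 0. Let μ_Λ be the product probability measure on ℤ^d → ℝ (with the product σ-algebra) whose factor at n ∈ ℤ^d is the centered Gaussian measure on ℝ with variance v_Λ(n) = exp(−‖n‖²/Λ)/(2(‖n‖²+1)), where ‖n‖ denotes the Euclidean norm of n. Then μ_Λ assigns measure 1 to the set of all a : ℤ^d → ℝ such that the family n ↦ exp(‖n‖)·(a n)² is summable. -/
open MeasureTheory ProbabilityTheory

/-- The Euclidean norm of a lattice point `n : Fin d → ℤ`. -/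
noncomputable def latticeNorm {d : ℕ} (n : Fin d → ℤ) : ℝ :=
  Real.sqrt (∑ i, ((n i : ℝ)) ^ 2)

/-- The variance `v_Λ(n) = exp(−‖n‖²/Λ)/(2(‖n‖²+1))` of the Gaussian factor at `n`. -/
noncomputable def varCutoff {d : ℕ} (Λ : ℝ) (n : Fin d → ℤ) : NNReal :=
  (Real.exp (-(latticeNorm n ^ 2) / Λ) / (2 * (latticeNorm n ^ 2 + 1))).toNNReal

/-- `μ` is the product over `n : Fin d → ℤ` of the centered Gaussian measures on `ℝ` with
variances `v n`, characterized through its values on all measurable cylinder sets. -/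
def IsProductGaussian {d : ℕ} (μ : Measure ((Fin d → ℤ) → ℝ))
    (v : (Fin d → ℤ) → NNReal) : Prop :=
  ∀ (F : Finset (Fin d → ℤ)) (B : (Fin d → ℤ) → Set ℝ), (∀ n, MeasurableSet (B n)) →
    μ {a | ∀ n ∈ F, a n ∈ B n} = ∏ n ∈ F, gaussianReal 0 (v n) (B n)

/-! First Borel–Cantelli lemma. Since `v_Λ(n) ≤ exp (-‖n‖² / Λ)`, Chebyshev's inequality bounds
the probability that `exp ‖n‖ * a(n)²` exceeds `exp (-‖n‖² / 2Λ)` by `exp (Λ - ‖n‖² / 4Λ)`.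
Gaussian weights are summable over `ℤ^d`, being products of one-dimensional theta series, so
almost surely only finitely many of these events occur, and off them the series is dominated
by `∑ exp (-‖n‖² / 2Λ)`. -/

open Real Set

lemma summable_int_exp_neg_mul_sq {c : ℝ} (hc : 0 < c) :
    Summable fun z : ℤ => rexp (-c * z ^ 2) := by
  have hτ : 0 < (Complex.I * (c / π : ℝ)).im := by simpa using div_pos hc pi_pos
  refine ((summable_jacobiTheta₂_term_iff 0 _).mpr hτ).norm.congr fun z => ?_
  rw [norm_jacobiTheta₂_term]
  simp only [Complex.mul_im, Complex.I_re, Complex.I_im, Complex.ofReal_re, Complex.ofReal_im,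
    Complex.zero_im]
  congr 1
  field_simp
  ring

lemma summable_pi_prod_of_nonneg {ι : Type*} {f : ι → ℝ} (hf₀ : ∀ i, 0 ≤ f i)
    (hf : Summable f) : ∀ m : ℕ, Summable fun n : Fin m → ι => ∏ k, f (n k)
  | 0 => .of_finite
  | m + 1 => by
    rw [← (Fin.consEquiv fun _ => ι).summable_iff]
    refine (hf.mul_of_nonneg (summable_pi_prod_of_nonneg hf₀ hf m) hf₀
      fun n => Finset.prod_nonneg fun k _ => hf₀ (n k)).congr fun p => ?_
    simp [Fin.consEquiv, Fin.prod_univ_succ]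

lemma latticeNorm_sq {d : ℕ} (n : Fin d → ℤ) : latticeNorm n ^ 2 = ∑ k, (n k : ℝ) ^ 2 :=
  sq_sqrt (Finset.sum_nonneg fun _ _ => sq_nonneg _)

lemma summable_exp_neg_mul_latticeNorm_sq {d : ℕ} {c : ℝ} (hc : 0 < c) :
    Summable fun n : Fin d → ℤ => rexp (-c * latticeNorm n ^ 2) := by
  refine (summable_pi_prod_of_nonneg (fun _ => (exp_pos _).le)
    (summable_int_exp_neg_mul_sq hc) d).congr fun n => ?_
  rw [latticeNorm_sq, Finset.mul_sum, exp_sum]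

lemma varCutoff_le {d : ℕ} (Λ : ℝ) (n : Fin d → ℤ) :
    (varCutoff Λ n : ℝ) ≤ rexp (-Λ⁻¹ * latticeNorm n ^ 2) := by
  have hden : 1 ≤ 2 * (latticeNorm n ^ 2 + 1) := by nlinarith [sq_nonneg (latticeNorm n)]
  rw [varCutoff, Real.coe_toNNReal _ (by positivity)]
  refine (div_le_self (exp_pos _).le hden).trans_eq ?_
  congr 1
  ring

lemma gaussianReal_setOf_lt_sq_le (v : NNReal) {s : ℝ} (hs : 0 < s) :
    gaussianReal 0 v {x | s < x ^ 2} ≤ ENNReal.ofReal (v / s) := by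
  have h := meas_ge_le_variance_div_sq (memLp_id_gaussianReal' (μ := 0) (v := v) 2 (by simp))
    (sqrt_pos.mpr hs)
  rw [variance_id_gaussianReal, sq_sqrt hs.le] at h
  refine (measure_mono fun x hx => ?_).trans h
  simp only [mem_ofPred_eq, id, integral_id_gaussianReal, sub_zero] at hx ⊢
  rw [← sqrt_sq_eq_abs]
  exact sqrt_le_sqrt hx.le

lemma ae_summable_of_tsum_measure_lt_ne_top {ι α : Type*} [Countable ι] [MeasurableSpace α]
    {μ : Measure α} {f : ι → α → ℝ} {g : ι → ℝ} (hf : ∀ i x, 0 ≤ f i x) (hg : Summable g)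
    (h : ∑' i, μ {x | g i < f i x} ≠ ⊤) : ∀ᵐ x ∂μ, Summable fun i => f i x := by
  filter_upwards [ae_finite_setOfPred_mem h] with x hx
  rw [← hx.summable_compl_iff]
  refine (hg.subtype _).of_nonneg_of_le (fun i => hf _ _) fun ⟨i, hi⟩ => ?_
  simpa using hi

namespace IsProductGaussian

variable {d : ℕ} {μ : Measure ((Fin d → ℤ) → ℝ)} {v : (Fin d → ℤ) → NNReal}

lemma measure_univ (hμ : IsProductGaussian μ v) : μ univ = 1 := by
  simpa using hμ ∅ (fun _ => univ) fun _ => .univ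

lemma measure_eval_mem (hμ : IsProductGaussian μ v) (n : Fin d → ℤ) {B : Set ℝ}
    (hB : MeasurableSet B) : μ {a | a n ∈ B} = gaussianReal 0 (v n) B := by
  simpa using hμ {n} (fun _ => B) fun _ => hB

end IsProductGaussian

lemma measure_exp_neg_lt_exp_mul_sq_le {d : ℕ} {Λ : ℝ} (hΛ : 0 < Λ)
    {μ : Measure ((Fin d → ℤ) → ℝ)} (hμ : IsProductGaussian μ (varCutoff Λ)) (n : Fin d → ℤ) :
    μ {a | rexp (-(2 * Λ)⁻¹ * latticeNorm n ^ 2) < rexp (latticeNorm n) * a n ^ 2} ≤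
      ENNReal.ofReal (rexp Λ * rexp (-(4 * Λ)⁻¹ * latticeNorm n ^ 2)) := by
  set L := latticeNorm n
  set s := rexp (-(2 * Λ)⁻¹ * L ^ 2) / rexp L
  have hs : 0 < s := by positivity
  have hset : {a : (Fin d → ℤ) → ℝ | rexp (-(2 * Λ)⁻¹ * L ^ 2) < rexp L * a n ^ 2} =
      {a | a n ∈ {x | s < x ^ 2}} := by
    ext a
    simp only [mem_ofPred_eq, s, div_lt_iff₀' (exp_pos L)]
  rw [hset, hμ.measure_eval_mem n (measurableSet_lt measurable_const (by fun_prop))]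
  refine (gaussianReal_setOf_lt_sq_le _ hs).trans (ENNReal.ofReal_le_ofReal ?_)
  calc (varCutoff Λ n : ℝ) / s ≤ rexp (-Λ⁻¹ * L ^ 2) / s := by gcongr; exact varCutoff_le Λ n
    _ = rexp (-(2 * Λ)⁻¹ * L ^ 2 + L) := by
      rw [div_div_eq_mul_div, ← exp_add, ← exp_sub]; congr 1; field_simp; ring
    _ ≤ rexp Λ * rexp (-(4 * Λ)⁻¹ * L ^ 2) := by
      rw [← exp_add, exp_le_exp]
      field_simp
      nlinarith [sq_nonneg (L - 2 * Λ)]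

theorem gaussian_ae_summable_expNorm_sq_general {d : ℕ} {Λ : ℝ} (hΛ : 0 < Λ)
    (μ : Measure ((Fin d → ℤ) → ℝ)) (hμ : IsProductGaussian μ (varCutoff Λ)) :
    μ {a : (Fin d → ℤ) → ℝ | Summable fun n => Real.exp (latticeNorm n) * (a n) ^ 2} = 1 := by
  have hbound : Summable fun n : Fin d → ℤ => rexp Λ * rexp (-(4 * Λ)⁻¹ * latticeNorm n ^ 2) :=
    (summable_exp_neg_mul_latticeNorm_sq (by positivity)).mul_left _
  have hae : ∀ᵐ a ∂μ, Summable fun n => rexp (latticeNorm n) * a n ^ 2 :=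
    ae_summable_of_tsum_measure_lt_ne_top (fun _ _ => by positivity)
      (summable_exp_neg_mul_latticeNorm_sq (by positivity : 0 < (2 * Λ)⁻¹))
      (ne_top_of_le_ne_top hbound.tsum_ofReal_ne_top
        (ENNReal.tsum_le_tsum (measure_exp_neg_lt_exp_mul_sq_le hΛ hμ)))
  rw [measure_congr (ae_eq_univ.mpr hae), hμ.measure_univ]

/-- The product Gaussian measure `μ_Λ` gives full measure to the set of `a : ℤ^d → ℝ`
such that `n ↦ exp(‖n‖) (a n)²` is summable. -/
theorem gaussian_ae_summable_expNorm_sq {d : ℕ} (hd : 1 ≤ d) {Λ : ℝ} (hΛ : 0 < Λ)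
    (μ : Measure ((Fin d → ℤ) → ℝ)) (hμ : IsProductGaussian μ (varCutoff Λ)) :
    μ {a : (Fin d → ℤ) → ℝ | Summable fun n => Real.exp (latticeNorm n) * (a n) ^ 2} = 1 :=
  gaussian_ae_summable_expNorm_sq_general hΛ μ hμ
end

section
/- Fix an integer d ≥ 1, Λ > Λ' > 0 and b ∈ ℝ. Let S : (ℤ^d → ℝ) → ℝ be measurable, square-integrable with respect to μ_Λ, and satisfy S ≥ b μ_Λ-almost everywhere. Then the integration-out map I_{Λ,Λ'}(S)(ψ) = −log ∫ exp(−S(φ + ψ)) dμ_{Λ,Λ'}(φ) is defined for μ_{Λ'}-almost every ψ, satisfies I_{Λ,Λ'}(S) ≥ b μ_{Λ'}-almost everywhere, is square-integrable with respect to μ_{Λ'}, and √(∫ (I_{Λ,Λ'}(S)(ψ))² dμ_{Λ'}(ψ)) ≤ |b| + √(∫ S(χ)² dμ_Λ(χ)). -/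
open MeasureTheory ProbabilityTheory

/-- The variance `v_{Λ,Λ'}(n) = (exp(−‖n‖²/Λ) − exp(−‖n‖²/Λ'))/(2(‖n‖²+1))`. -/
noncomputable def varCutoffDiff {d : ℕ} (Λ Λ' : ℝ) (n : Fin d → ℤ) : NNReal :=
  ((Real.exp (-(latticeNorm n ^ 2) / Λ) - Real.exp (-(latticeNorm n ^ 2) / Λ')) /
    (2 * (latticeNorm n ^ 2 + 1))).toNNReal

/-- The integration-out map of the renormalization group:
`I(S)(ψ) = −log ∫ exp(−S(φ+ψ)) dμ(φ)`, where `μ` is the fluctuation measure. -/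
noncomputable def integrateOut {d : ℕ} (μ : Measure ((Fin d → ℤ) → ℝ))
    (S : ((Fin d → ℤ) → ℝ) → ℝ) (ψ : (Fin d → ℤ) → ℝ) : ℝ :=
  -Real.log (∫ φ, Real.exp (-S (φ + ψ)) ∂μ)

/-! The variances add, `v_{Λ,Λ'} + v_{Λ'} = v_Λ`, so `μ_Λ = μ_{Λ,Λ'} ∗ μ_{Λ'}` and integrals
against `μ_Λ` become iterated integrals over the fluctuation `φ` and the background `ψ`.
For fixed `ψ`, the lower bound `b ≤ S` passes to `I(S)(ψ)`, while Jensen's inequality for `exp`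
gives `I(S)(ψ) ≤ T(ψ) := ∫ S(φ + ψ) dμ_{Λ,Λ'}(φ)`; hence `|I(S)| ≤ |b| + |T|`. Minkowski's
inequality in `L²(μ_{Λ'})` and Jensen's inequality for `x ↦ x²`, which gives
`‖T‖_{L²(μ_{Λ'})} ≤ ‖S‖_{L²(μ_Λ)}`, finish the proof. -/

namespace MeasureTheory.Measure

variable {ι G : Type*} [MeasurableSpace G] [AddMonoid G] [MeasurableAdd₂ G]

theorem pi_conv_pi [Fintype ι] (μ ν : ι → Measure G) [∀ i, IsFiniteMeasure (μ i)]
    [∀ i, IsFiniteMeasure (ν i)] :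
    Measure.pi μ ∗ Measure.pi ν = Measure.pi fun i ↦ μ i ∗ ν i := by
  rw [conv, ← (measurePreserving_arrowProdEquivProdArrow G G ι μ ν).map_eq,
    map_map (by fun_prop) (MeasurableEquiv.measurable _)]
  exact pi_map_pi fun i ↦ measurable_add.aemeasurable

theorem infinitePi_conv_infinitePi [Countable ι] (μ ν : ι → Measure G)
    [∀ i, IsProbabilityMeasure (μ i)] [∀ i, IsProbabilityMeasure (ν i)] :
    infinitePi μ ∗ infinitePi ν = infinitePi fun i ↦ μ i ∗ ν i := by
  refine IsProjectiveLimit.unique (fun s ↦ ?_) (isProjectiveLimit_infinitePi _)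
  let restrict : (ι → G) →+ (s → G) := AddMonoidHom.pi fun i ↦ Pi.evalAddMonoidHom _ i.1
  rw [← pi_conv_pi, ← infinitePi_map_restrict, ← infinitePi_map_restrict]
  exact map_conv_addMonoidHom restrict s.measurable_restrict

end MeasureTheory.Measure

theorem IsProductGaussian.eq_infinitePi {d : ℕ} {μ : Measure ((Fin d → ℤ) → ℝ)}
    {v : (Fin d → ℤ) → NNReal} (h : IsProductGaussian μ v) :
    μ = Measure.infinitePi fun n ↦ gaussianReal 0 (v n) :=
  Measure.eq_infinitePi _ h

theorem varCutoffDiff_add_varCutoff {d : ℕ} {Λ Λ' : ℝ} (hΛ' : 0 < Λ') (hΛ : Λ' < Λ)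
    (n : Fin d → ℤ) : varCutoffDiff Λ Λ' n + varCutoff Λ' n = varCutoff Λ n := by
  have hden : 0 < 2 * (latticeNorm n ^ 2 + 1) := by positivity
  have hexp : Real.exp (-(latticeNorm n ^ 2) / Λ') ≤ Real.exp (-(latticeNorm n ^ 2) / Λ) := by
    rw [neg_div, neg_div]
    gcongr
  rw [varCutoffDiff, varCutoff, varCutoff,
    ← Real.toNNReal_add (div_nonneg (sub_nonneg.2 hexp) hden.le) (by positivity),
    ← add_div, sub_add_cancel]

theorem IsProductGaussian.conv_eq {d : ℕ} {Λ Λ' : ℝ} (hΛ' : 0 < Λ') (hΛ : Λ' < Λ)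
    {μΛ μΛ' μΛΛ' : Measure ((Fin d → ℤ) → ℝ)}
    (hμΛΛ' : IsProductGaussian μΛΛ' (varCutoffDiff Λ Λ'))
    (hμΛ' : IsProductGaussian μΛ' (varCutoff Λ')) (hμΛ : IsProductGaussian μΛ (varCutoff Λ)) :
    μΛΛ' ∗ μΛ' = μΛ := by
  simp only [hμΛ.eq_infinitePi, hμΛ'.eq_infinitePi, hμΛΛ'.eq_infinitePi,
    Measure.infinitePi_conv_infinitePi, gaussianReal_conv_gaussianReal, add_zero,
    varCutoffDiff_add_varCutoff hΛ' hΛ]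

section LogLaplace

variable {α : Type*} [MeasurableSpace α] {μ : Measure α} {f : α → ℝ}

theorem integrable_exp_neg_of_ae_le [IsFiniteMeasure μ] {b : ℝ} (hf : AEStronglyMeasurable f μ)
    (hb : ∀ᵐ x ∂μ, b ≤ f x) : Integrable (fun x ↦ Real.exp (-f x)) μ := by
  refine (integrable_const (Real.exp (-b))).mono' (by fun_prop) ?_
  filter_upwards [hb] with x hx
  rw [Real.norm_of_nonneg (Real.exp_nonneg _)]
  exact Real.exp_le_exp.2 (neg_le_neg hx)

variable [IsProbabilityMeasure μ]

theorem sq_integral_le_integral_sq (hf : MemLp f 2 μ) : (∫ x, f x ∂μ) ^ 2 ≤ ∫ x, f x ^ 2 ∂μ :=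
  even_two.convexOn_pow.map_integral_le (continuous_pow 2).continuousOn isClosed_univ
    (ae_of_all _ fun _ ↦ Set.mem_univ _) (hf.integrable one_le_two) hf.integrable_sq

theorem le_neg_log_integral_exp_neg {b : ℝ} (hf : AEStronglyMeasurable f μ)
    (hb : ∀ᵐ x ∂μ, b ≤ f x) : b ≤ -Real.log (∫ x, Real.exp (-f x) ∂μ) := by
  have hint := integrable_exp_neg_of_ae_le hf hb
  have hle : ∫ x, Real.exp (-f x) ∂μ ≤ Real.exp (-b) := by
    simpa using integral_mono_ae hint (integrable_const (Real.exp (-b)))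
      (hb.mono fun _ hx ↦ Real.exp_le_exp.2 (neg_le_neg hx))
  rw [le_neg, Real.log_le_iff_le_exp (integral_exp_pos hint)]
  exact hle

theorem neg_log_integral_exp_neg_le_integral (hf : Integrable f μ)
    (hexp : Integrable (fun x ↦ Real.exp (-f x)) μ) :
    -Real.log (∫ x, Real.exp (-f x) ∂μ) ≤ ∫ x, f x ∂μ := by
  have hjensen : Real.exp (∫ x, -f x ∂μ) ≤ ∫ x, Real.exp (-f x) ∂μ :=
    convexOn_exp.map_integral_le Real.continuous_exp.continuousOn isClosed_univ
      (ae_of_all _ fun _ ↦ Set.mem_univ _) hf.neg hexp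
  rw [neg_le, ← integral_neg, Real.le_log_iff_exp_le (integral_exp_pos hexp)]
  exact hjensen

theorem abs_neg_log_integral_exp_neg_le {b : ℝ} (hf : Integrable f μ) (hb : ∀ᵐ x ∂μ, b ≤ f x) :
    |-Real.log (∫ x, Real.exp (-f x) ∂μ)| ≤ |b| + |∫ x, f x ∂μ| := by
  have hlower := le_neg_log_integral_exp_neg hf.1 hb
  have hupper := neg_log_integral_exp_neg_le_integral hf (integrable_exp_neg_of_ae_le hf.1 hb)
  rw [abs_le]
  constructor <;> linarith [neg_abs_le b, le_abs_self (∫ x, f x ∂μ), abs_nonneg b,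
    abs_nonneg (∫ x, f x ∂μ)]

end LogLaplace

section L2

variable {α : Type*} [MeasurableSpace α] {μ : Measure α}

theorem MeasureTheory.MemLp.eLpNorm_two_eq_ofReal_sqrt {f : α → ℝ} (hf : MemLp f 2 μ) :
    eLpNorm f 2 μ = ENNReal.ofReal √(∫ x, f x ^ 2 ∂μ) := by
  simp [hf.eLpNorm_eq_integral_rpow_norm two_ne_zero ENNReal.ofNat_ne_top, Real.sqrt_eq_rpow]

theorem eLpNorm_le_ofReal_add_eLpNorm [IsProbabilityMeasure μ] {p : ENNReal} (hp : 1 ≤ p)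
    {f g : α → ℝ} {c : ℝ} (hc : 0 ≤ c) (hg : AEStronglyMeasurable g μ)
    (h : ∀ᵐ x ∂μ, |f x| ≤ c + |g x|) :
    eLpNorm f p μ ≤ ENNReal.ofReal c + eLpNorm g p μ :=
  calc eLpNorm f p μ ≤ eLpNorm ((fun _ ↦ c) + fun x ↦ ‖g x‖) p μ :=
        eLpNorm_mono_ae_real (by simpa using h)
    _ ≤ eLpNorm (fun _ ↦ c) p μ + eLpNorm (fun x ↦ ‖g x‖) p μ :=
        eLpNorm_add_le aestronglyMeasurable_const hg.norm hp
    _ = ENNReal.ofReal c + eLpNorm g p μ := by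
        rw [eLpNorm_const _ (by positivity) (IsProbabilityMeasure.ne_zero μ), measure_univ,
          ENNReal.one_rpow, mul_one, Real.enorm_of_nonneg hc, eLpNorm_norm]

end L2

section Convolution

variable {E : Type*} [MeasurableSpace E] [AddMonoid E] [MeasurableAdd₂ E] {ν ρ : Measure E}

theorem MeasureTheory.Integrable.comp_add_prod {f : E → ℝ} (hf : Integrable f (ν ∗ ρ)) :
    Integrable (fun q : E × E ↦ f (q.1 + q.2)) (ν.prod ρ) :=
  (integrable_map_measure hf.1 measurable_add.aemeasurable).1 hf

variable [SFinite ν] [SFinite ρ]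

theorem ae_ae_add_of_ae_conv {p : E → Prop} (hp : MeasurableSet {χ | p χ})
    (h : ∀ᵐ χ ∂(ν ∗ ρ), p χ) : ∀ᵐ ψ ∂ρ, ∀ᵐ φ ∂ν, p (φ + ψ) := by
  have hprod : ∀ᵐ q ∂(ν.prod ρ), p (q.1 + q.2) :=
    (ae_map_iff measurable_add.aemeasurable hp).1 h
  exact (Measure.ae_ae_comm (p := fun φ ψ ↦ p (φ + ψ)) (measurable_add hp)).1
    (Measure.ae_ae_of_ae_prod hprod)

theorem integral_integral_comp_add {f : E → ℝ} (hf : Integrable f (ν ∗ ρ)) :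
    ∫ ψ, ∫ φ, f (φ + ψ) ∂ν ∂ρ = ∫ χ, f χ ∂(ν ∗ ρ) := by
  rw [← integral_prod_symm _ hf.comp_add_prod,
    Measure.conv, integral_map measurable_add.aemeasurable hf.1]

theorem memLp_integral_comp_add [IsProbabilityMeasure ν] {S : E → ℝ} (hS : Measurable S)
    (hS2 : MemLp S 2 (ν ∗ ρ)) :
    MemLp (fun ψ ↦ ∫ φ, S (φ + ψ) ∂ν) 2 ρ ∧
      eLpNorm (fun ψ ↦ ∫ φ, S (φ + ψ) ∂ν) 2 ρ ≤ eLpNorm S 2 (ν ∗ ρ) := by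
  have hsq : Integrable (fun q : E × E ↦ S (q.1 + q.2) ^ 2) (ν.prod ρ) :=
    hS2.integrable_sq.comp_add_prod
  have hjensen : ∀ᵐ ψ ∂ρ, (∫ φ, S (φ + ψ) ∂ν) ^ 2 ≤ ∫ φ, S (φ + ψ) ^ 2 ∂ν := by
    filter_upwards [hsq.prod_left_ae] with ψ hψ
    exact sq_integral_le_integral_sq <| (memLp_two_iff_integrable_sq
      (hS.comp (measurable_add_const ψ)).aestronglyMeasurable).2 hψ
  have hmeas : StronglyMeasurable fun ψ ↦ ∫ φ, S (φ + ψ) ∂ν :=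
    (hS.comp measurable_add).stronglyMeasurable.integral_prod_left'
  have hT : MemLp (fun ψ ↦ ∫ φ, S (φ + ψ) ∂ν) 2 ρ :=
    (memLp_two_iff_integrable_sq hmeas.aestronglyMeasurable).2 <|
      hsq.integral_prod_right.mono' (hmeas.measurable.pow_const 2).aestronglyMeasurable
        (hjensen.mono fun ψ h ↦ by rwa [Real.norm_of_nonneg (sq_nonneg _)])
  refine ⟨hT, ?_⟩
  rw [hT.eLpNorm_two_eq_ofReal_sqrt, hS2.eLpNorm_two_eq_ofReal_sqrt,
    ← integral_integral_comp_add hS2.integrable_sq]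
  exact ENNReal.ofReal_le_ofReal <| Real.sqrt_le_sqrt <|
    integral_mono_ae hT.integrable_sq hsq.integral_prod_right hjensen

end Convolution

theorem measurable_integrateOut {d : ℕ} {μ : Measure ((Fin d → ℤ) → ℝ)} [SFinite μ]
    {S : ((Fin d → ℤ) → ℝ) → ℝ} (hS : Measurable S) : Measurable (integrateOut μ S) :=
  (hS.comp measurable_add).neg.exp.stronglyMeasurable.integral_prod_left'.measurable.log.neg

theorem integrateOut_memLp_of_bddBelow_general {d : ℕ} {Λ Λ' : ℝ}
    (hΛ' : 0 < Λ') (hΛ : Λ' < Λ) (b : ℝ)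
    (μΛ μΛ' μΛΛ' : Measure ((Fin d → ℤ) → ℝ))
    (hμΛ : IsProductGaussian μΛ (varCutoff Λ))
    (hμΛ' : IsProductGaussian μΛ' (varCutoff Λ'))
    (hμΛΛ' : IsProductGaussian μΛΛ' (varCutoffDiff Λ Λ'))
    (S : ((Fin d → ℤ) → ℝ) → ℝ) (hSmeas : Measurable S)
    (hS2 : Integrable (fun χ => S χ ^ 2) μΛ)
    (hSb : ∀ᵐ χ ∂μΛ, b ≤ S χ) :
    (∀ᵐ ψ ∂μΛ', Integrable (fun φ => Real.exp (-S (φ + ψ))) μΛΛ' ∧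
        0 < ∫ φ, Real.exp (-S (φ + ψ)) ∂μΛΛ') ∧
      (∀ᵐ ψ ∂μΛ', b ≤ integrateOut μΛΛ' S ψ) ∧
      Integrable (fun ψ => integrateOut μΛΛ' S ψ ^ 2) μΛ' ∧
      Real.sqrt (∫ ψ, integrateOut μΛΛ' S ψ ^ 2 ∂μΛ') ≤
        |b| + Real.sqrt (∫ χ, S χ ^ 2 ∂μΛ) := by
  have : IsProbabilityMeasure μΛ' := hμΛ'.eq_infinitePi ▸ inferInstance
  have : IsProbabilityMeasure μΛΛ' := hμΛΛ'.eq_infinitePi ▸ inferInstance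
  obtain rfl : μΛΛ' ∗ μΛ' = μΛ := hμΛΛ'.conv_eq hΛ' hΛ hμΛ' hμΛ
  have hSL2 : MemLp S 2 (μΛΛ' ∗ μΛ') :=
    (memLp_two_iff_integrable_sq hSmeas.aestronglyMeasurable).2 hS2
  have hb : ∀ᵐ ψ ∂μΛ', ∀ᵐ φ ∂μΛΛ', b ≤ S (φ + ψ) :=
    ae_ae_add_of_ae_conv (measurableSet_le measurable_const hSmeas) hSb
  have hmeas (ψ : (Fin d → ℤ) → ℝ) : AEStronglyMeasurable (fun φ ↦ S (φ + ψ)) μΛΛ' :=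
    (hSmeas.comp (measurable_add_const ψ)).aestronglyMeasurable
  have hslice : ∀ᵐ ψ ∂μΛ', Integrable (fun φ ↦ S (φ + ψ)) μΛΛ' :=
    (hSL2.integrable one_le_two).comp_add_prod.prod_left_ae
  obtain ⟨hT, hTS⟩ := memLp_integral_comp_add hSmeas hSL2
  have hI : ∀ᵐ ψ ∂μΛ', |integrateOut μΛΛ' S ψ| ≤ |b| + |∫ φ, S (φ + ψ) ∂μΛΛ'| := by
    filter_upwards [hb, hslice] with ψ hbψ hψ using abs_neg_log_integral_exp_neg_le hψ hbψ
  have hIS : eLpNorm (integrateOut μΛΛ' S) 2 μΛ' ≤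
      ENNReal.ofReal |b| + eLpNorm S 2 (μΛΛ' ∗ μΛ') :=
    (eLpNorm_le_ofReal_add_eLpNorm one_le_two (abs_nonneg b) hT.1 hI).trans (by gcongr)
  have hIL2 : MemLp (integrateOut μΛΛ' S) 2 μΛ' :=
    ⟨(measurable_integrateOut hSmeas).aestronglyMeasurable,
      hIS.trans_lt (ENNReal.add_lt_top.2 ⟨ENNReal.ofReal_lt_top, hSL2.2⟩)⟩
  refine ⟨?_, ?_, hIL2.integrable_sq, ?_⟩
  · filter_upwards [hb] with ψ hbψ
    have hexp := integrable_exp_neg_of_ae_le (hmeas ψ) hbψ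
    exact ⟨hexp, integral_exp_pos hexp⟩
  · filter_upwards [hb] with ψ hbψ using le_neg_log_integral_exp_neg (hmeas ψ) hbψ
  · rw [hIL2.eLpNorm_two_eq_ofReal_sqrt, hSL2.eLpNorm_two_eq_ofReal_sqrt,
      ← ENNReal.ofReal_add (abs_nonneg b) (Real.sqrt_nonneg _)] at hIS
    exact (ENNReal.ofReal_le_ofReal_iff (by positivity)).1 hIS

/-- For `S` measurable, square-integrable w.r.t. `μ_Λ`, and bounded below by `b` a.e., the
integration-out map `I_{Λ,Λ'}(S)` is well defined for a.e. `ψ`, is bounded below by `b`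
a.e., is square-integrable w.r.t. `μ_{Λ'}`, and
`√(∫ I_{Λ,Λ'}(S)² dμ_{Λ'}) ≤ |b| + √(∫ S² dμ_Λ)`. -/
theorem integrateOut_memLp_of_bddBelow {d : ℕ} (hd : 1 ≤ d) {Λ Λ' : ℝ}
    (hΛ' : 0 < Λ') (hΛ : Λ' < Λ) (b : ℝ)
    (μΛ μΛ' μΛΛ' : Measure ((Fin d → ℤ) → ℝ))
    (hμΛ : IsProductGaussian μΛ (varCutoff Λ))
    (hμΛ' : IsProductGaussian μΛ' (varCutoff Λ'))
    (hμΛΛ' : IsProductGaussian μΛΛ' (varCutoffDiff Λ Λ'))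
    (S : ((Fin d → ℤ) → ℝ) → ℝ) (hSmeas : Measurable S)
    (hS2 : Integrable (fun χ => S χ ^ 2) μΛ)
    (hSb : ∀ᵐ χ ∂μΛ, b ≤ S χ) :
    (∀ᵐ ψ ∂μΛ', Integrable (fun φ => Real.exp (-S (φ + ψ))) μΛΛ' ∧
        0 < ∫ φ, Real.exp (-S (φ + ψ)) ∂μΛΛ') ∧
      (∀ᵐ ψ ∂μΛ', b ≤ integrateOut μΛΛ' S ψ) ∧
      Integrable (fun ψ => integrateOut μΛΛ' S ψ ^ 2) μΛ' ∧
      Real.sqrt (∫ ψ, integrateOut μΛΛ' S ψ ^ 2 ∂μΛ') ≤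
        |b| + Real.sqrt (∫ χ, S χ ^ 2 ∂μΛ) :=
  integrateOut_memLp_of_bddBelow_general hΛ' hΛ b μΛ μΛ' μΛΛ' hμΛ hμΛ' hμΛΛ' S hSmeas hS2 hSb
end

section
/- Let N ≥ 1 be an integer, let f : ℝ^N → ℝ be continuous with f(x) ≥ 0 for all x, let 0 < r < R, and let ε > 0. Then there exist a finite set F ⊆ ℤ^N and coefficients c : F → ℂ such that the trigonometric polynomial T(x) = Re(∑_{k ∈ F} c(k)·exp(πi⟨k, x⟩/R)) satisfies: (i) T(x) ≥ 0 for all x ∈ ℝ^N; (ii) T(x) ≤ sup_{y ∈ [−R,R]^N} f(y) for all x ∈ ℝ^N; and (iii) |T(x) − f(x)| < ε for all x ∈ [−r, r]^N. -/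
/-!
Rescaling by `2R` wraps the box `[-R, R)^N` bijectively onto the unit torus, so by Tietze the
restriction of `f` to `[-r, r]^N` extends to a continuous function `g` on the torus with values
in `[0, M]`, `M` the supremum of `f` on `[-R, R]^N`. Stone–Weierstrass approximates `g` by a
trigonometric polynomial `Q` within `δ`; then `σ (Re Q + δ)` with `σ = M / (M + 2δ)` lies in
`[0, M]` and stays within `2δ` of `g`.
-/

open Complex Set UnitAddTorus

theorem rescale_mem_Icc_and_abs_sub_lt {u q M δ : ℝ} (hu : u ∈ Icc 0 M) (hδ : 0 < δ)
    (hqu : |q - u| < δ) :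
    M / (M + 2 * δ) * (q + δ) ∈ Icc 0 M ∧ |M / (M + 2 * δ) * (q + δ) - u| < 2 * δ := by
  obtain ⟨hu0, huM⟩ := hu
  obtain ⟨hqu₁, hqu₂⟩ := abs_lt.mp hqu
  have hMδ : 0 < M + 2 * δ := by linarith
  set σ := M / (M + 2 * δ)
  have hσ0 : 0 ≤ σ := div_nonneg (hu0.trans huM) hMδ.le
  have hσ1 : σ ≤ 1 := (div_le_one hMδ).mpr (by linarith)
  have hσM : σ * (M + 2 * δ) = M := div_mul_cancel₀ M hMδ.ne'
  refine ⟨⟨by nlinarith, by nlinarith⟩, abs_lt.mpr ⟨by nlinarith, by nlinarith⟩⟩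

theorem exists_continuousMap_mem_Icc_comp_eqOn {X Y : Type*} [TopologicalSpace X]
    [TopologicalSpace Y] [NormalSpace Y] [T2Space Y] {p : X → Y} (hp : Continuous p)
    {K : Set X} (hK : IsCompact K) (hpK : InjOn p K) {f : X → ℝ} (hf : ContinuousOn f K)
    {a b : ℝ} (hab : a ≤ b) (hfK : MapsTo f K (Icc a b)) :
    ∃ g : C(Y, ℝ), (∀ y, g y ∈ Icc a b) ∧ EqOn (g ∘ p) f K := by
  have := isCompact_iff_compactSpace.mp hK
  have hemb : Topology.IsClosedEmbedding (K.domRestrict p) :=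
    (hp.comp continuous_subtype_val).isClosedEmbedding hpK.injective
  obtain ⟨g, hg⟩ := ContinuousMap.exists_extension' hemb ⟨K.domRestrict f, hf.domRestrict⟩
  refine ⟨⟨fun y => projIcc a b hab (g y), by fun_prop⟩, fun y => Subtype.mem _, fun x hx => ?_⟩
  have hgx : g (p x) = f x := congrFun hg ⟨x, hx⟩
  change (projIcc a b hab (g (p x)) : ℝ) = f x
  rw [hgx, projIcc_of_mem hab (hfK hx)]

section Torus

variable {d : Type*} [Fintype d]

theorem exists_finset_sum_eq_of_mem_mFourierSubalgebra {P : C(UnitAddTorus d, ℂ)}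
    (hP : P ∈ mFourierSubalgebra d) :
    ∃ (s : Finset (d → ℤ)) (c : (d → ℤ) → ℂ), ∀ z, P z = ∑ k ∈ s, c k * mFourier k z := by
  have hP' : P ∈ Submodule.span ℂ (range mFourier) := by
    rw [← mFourierSubalgebra_coe]
    exact hP
  obtain ⟨c, rfl⟩ := Finsupp.mem_span_range_iff_exists_finsupp.mp hP'
  exact ⟨c.support, c, fun z => by simp [Finsupp.sum]⟩

theorem exists_mem_mFourierSubalgebra_re_mem_Icc_abs_sub_lt (g : C(UnitAddTorus d, ℝ))
    {M ε : ℝ} (hg : ∀ z, g z ∈ Icc 0 M) (hε : 0 < ε) :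
    ∃ P ∈ mFourierSubalgebra d, ∀ z, (P z).re ∈ Icc 0 M ∧ |(P z).re - g z| < ε := by
  set δ := ε / 2
  have hδ : 0 < δ := half_pos hε
  let gℂ : C(UnitAddTorus d, ℂ) := ⟨fun z => (g z : ℂ), by fun_prop⟩
  have hg_mem : gℂ ∈ closure (mFourierSubalgebra d : Set C(UnitAddTorus d, ℂ)) := by
    rw [← StarSubalgebra.topologicalClosure_coe, mFourierSubalgebra_closure_eq_top]
    exact mem_univ _
  obtain ⟨Q, hQ, hgQ⟩ := Metric.mem_closure_iff.mp hg_mem δ hδ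
  have hQg : ∀ z, |(Q z).re - g z| < δ := fun z =>
    calc |(Q z).re - g z| = |(Q z - gℂ z).re| := by simp [gℂ]
      _ ≤ ‖Q z - gℂ z‖ := abs_re_le_norm _
      _ = dist (Q z) (gℂ z) := (dist_eq_norm _ _).symm
      _ ≤ dist Q gℂ := ContinuousMap.dist_apply_le_dist z
      _ < δ := by rwa [dist_comm]
  set σ := M / (M + 2 * δ)
  refine ⟨(σ : ℂ) • Q + algebraMap ℂ _ ((σ * δ : ℝ) : ℂ),
    add_mem (Subalgebra.smul_mem _ hQ _) (Subalgebra.algebraMap_mem _ _), fun z => ?_⟩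
  have hre : (((σ : ℂ) • Q + algebraMap ℂ _ ((σ * δ : ℝ) : ℂ)) z).re = σ * ((Q z).re + δ) := by
    simp [mul_add]
  rw [hre, show ε = 2 * δ by ring]
  exact rescale_mem_Icc_and_abs_sub_lt (hg z) hδ (hQg z)

end Torus

section Periodization

variable {ι : Type*}

noncomputable def scaledCoe (R : ℝ) (x : ι → ℝ) : UnitAddTorus ι :=
  fun i => ((x i / (2 * R) : ℝ) : UnitAddCircle)

theorem continuous_scaledCoe (R : ℝ) : Continuous (scaledCoe (ι := ι) R) := by
  unfold scaledCoe
  fun_prop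

theorem mFourier_scaledCoe [Fintype ι] (R : ℝ) (k : ι → ℤ) (x : ι → ℝ) :
    mFourier k (scaledCoe R x) =
      exp (Real.pi * I * (∑ j, (k j : ℂ) * (x j : ℂ)) / R) := by
  simp only [mFourier, scaledCoe, ContinuousMap.coe_mk, fourier_coe_apply, ← exp_sum]
  congr 1
  push_cast
  rw [Finset.mul_sum, Finset.sum_div]
  refine Finset.sum_congr rfl fun j _ => ?_
  ring

theorem injOn_scaledCoe {R : ℝ} (hR : 0 < R) (a : ℝ) :
    InjOn (scaledCoe (ι := ι) R) (univ.pi fun _ => Ico a (a + 2 * R)) := by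
  intro x hx y hy hxy
  funext i
  have h2R : 0 < 2 * R := by linarith
  have hmem : ∀ t ∈ Ico a (a + 2 * R), t / (2 * R) ∈ Ico (a / (2 * R)) (a / (2 * R) + 1) := by
    rintro t ⟨hat, hta⟩
    rw [div_add_one h2R.ne']
    exact ⟨div_le_div_of_nonneg_right hat h2R.le, div_lt_div_of_pos_right hta h2R⟩
  have := (AddCircle.coe_eq_coe_iff_of_mem_Ico (hmem _ (hx i trivial)) (hmem _ (hy i trivial))).mp
    (congrFun hxy i)
  exact (div_left_inj' h2R.ne').mp this

end Periodization

theorem nonneg_trig_poly_approximation_general (N : ℕ)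
    (f : (Fin N → ℝ) → ℝ) (hf : Continuous f) (hf0 : ∀ x, 0 ≤ f x)
    (r R : ℝ) (hr : 0 < r) (hrR : r < R) (ε : ℝ) (hε : 0 < ε) :
    ∃ (F : Finset (Fin N → ℤ)) (c : (Fin N → ℤ) → ℂ) (T : (Fin N → ℝ) → ℝ),
      (∀ x : Fin N → ℝ,
        T x = (∑ k ∈ F, c k *
          Complex.exp (Real.pi * Complex.I * (∑ j, (k j : ℂ) * (x j : ℂ)) / (R : ℂ))).re) ∧
      (∀ x : Fin N → ℝ, 0 ≤ T x) ∧
      (∀ x : Fin N → ℝ,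
        T x ≤ sSup (f '' Set.Icc (fun _ => -R) (fun _ => R))) ∧
      ∀ x ∈ Set.Icc (fun _ => -r : Fin N → ℝ) (fun _ => r), |T x - f x| < ε := by
  have hR : 0 < R := hr.trans hrR
  set M := sSup (f '' Icc (fun _ => -R) (fun _ => R))
  have hfM : ∀ x ∈ Icc (fun _ => -R) (fun _ => R), f x ≤ M := fun x hx =>
    le_csSup (isCompact_Icc.image hf).bddAbove (mem_image_of_mem f hx)
  have hM : 0 ≤ M := (hf0 0).trans (hfM 0 ⟨fun _ => by simpa using hR.le, fun _ => hR.le⟩)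
  have hbox_sub : Icc (fun _ => -r : Fin N → ℝ) (fun _ => r) ⊆ Icc (fun _ => -R) (fun _ => R) :=
    Icc_subset_Icc (fun _ => by simp [hrR.le]) (fun _ => by simp [hrR.le])
  have hbox_Ico :
      Icc (fun _ => -r : Fin N → ℝ) (fun _ => r) ⊆ univ.pi fun _ => Ico (-R) (-R + 2 * R) :=
    fun x hx i _ => ⟨by linarith [hx.1 i], by linarith [hx.2 i]⟩
  have hinj : InjOn (scaledCoe R) (Icc (fun _ => -r : Fin N → ℝ) (fun _ => r)) :=
    (injOn_scaledCoe hR (-R)).mono hbox_Ico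
  obtain ⟨g, hg, hgf⟩ := exists_continuousMap_mem_Icc_comp_eqOn (continuous_scaledCoe R)
    isCompact_Icc hinj hf.continuousOn hM fun x hx => ⟨hf0 x, hfM x (hbox_sub hx)⟩
  obtain ⟨P, hP, hPg⟩ := exists_mem_mFourierSubalgebra_re_mem_Icc_abs_sub_lt g hg hε
  obtain ⟨F, c, hPc⟩ := exists_finset_sum_eq_of_mem_mFourierSubalgebra hP
  refine ⟨F, c, fun x => (P (scaledCoe R x)).re, fun x => by simp [hPc, mFourier_scaledCoe],
    fun x => (hPg _).1.1, fun x => (hPg _).1.2, fun x hx => ?_⟩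
  simpa [← hgf hx] using (hPg _).2

/-- Approximation of a continuous nonnegative function by a nonnegative trigonometric
polynomial of period `2R` in each variable which is everywhere dominated by the supremum
of `f` on the box `[−R,R]^N` and uniformly `ε`-close to `f` on the smaller box
`[−r,r]^N`. -/
theorem nonneg_trig_poly_approximation (N : ℕ) (hN : 1 ≤ N)
    (f : (Fin N → ℝ) → ℝ) (hf : Continuous f) (hf0 : ∀ x, 0 ≤ f x)
    (r R : ℝ) (hr : 0 < r) (hrR : r < R) (ε : ℝ) (hε : 0 < ε) :
    ∃ (F : Finset (Fin N → ℤ)) (c : (Fin N → ℤ) → ℂ) (T : (Fin N → ℝ) → ℝ),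
      (∀ x : Fin N → ℝ,
        T x = (∑ k ∈ F, c k *
          Complex.exp (Real.pi * Complex.I * (∑ j, (k j : ℂ) * (x j : ℂ)) / (R : ℂ))).re) ∧
      (∀ x : Fin N → ℝ, 0 ≤ T x) ∧
      (∀ x : Fin N → ℝ,
        T x ≤ sSup (f '' Set.Icc (fun _ => -R) (fun _ => R))) ∧
      ∀ x ∈ Set.Icc (fun _ => -r : Fin N → ℝ) (fun _ => r), |T x - f x| < ε :=
  nonneg_trig_poly_approximation_general N f hf hf0 r R hr hrR ε hε
end
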